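/- arXiv:1212.2331 — 2 statements merged into one kernel-verified Lean document; each statement's English description precedes it below -/
import Mathlib

section
/- Let n ≥ 1, G = ℍⁿ = {x ∈ ℝⁿ : xₙ > 0}, x ∈ G, and r ∈ (0,1). Then the metric ball B_s(x,r) in the triangular ratio metric is exactly the open Euclidean ball with center c and radius R, where c agrees with x in the first n−1 coordinates and has n-th coordinate xₙ(1+r²)/(1−r²), and R = 2xₙr/(1−r²). In particular B_s(x,r) is strictly convex. -/
/-!
For `x, y` in the half space, reflecting `y` to `y'` in the boundary hyperplane leaves the
distances from boundary points unchanged, so by the triangle inequality every boundary point `z`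
has `|z - x| + |z - y| ≥ |x - y'|`, with equality where the segment `[x, y']` crosses the
boundary. Hence `s(x, y) = |x - y| / |x - y'|`, and `s(x, y) < r` is the inside of an
Apollonius sphere, which a coordinate computation identifies with `B(c, R)`. This ball lies in
the half space because `cₙ - R = xₙ (1 - r) / (1 + r) > 0`.
-/

/-- The triangular ratio metric `s_G(x,y) = sup_{z ∈ ∂G} |x−y|/(|z−x|+|z−y|)`. -/
noncomputable def sMetric {n : ℕ} (G : Set (EuclideanSpace ℝ (Fin n)))
    (x y : EuclideanSpace ℝ (Fin n)) : ℝ :=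
  ⨆ z ∈ frontier G, dist x y / (dist z x + dist z y)

/-- The metric ball `B_s(x,r) = {y ∈ G : s_G(x,y) < r}`. -/
def sBall {n : ℕ} (G : Set (EuclideanSpace ℝ (Fin n))) (x : EuclideanSpace ℝ (Fin n))
    (r : ℝ) : Set (EuclideanSpace ℝ (Fin n)) :=
  {y ∈ G | sMetric G x y < r}

open Metric Finset

namespace EuclideanSpace

variable {ι : Type*}

section Reflection

variable [DecidableEq ι]

def coordReflection (i : ι) (y : EuclideanSpace ℝ ι) : EuclideanSpace ℝ ι :=
  WithLp.toLp 2 (Function.update (WithLp.ofLp y) i (-y i))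

@[simp]
theorem coordReflection_apply_self (i : ι) (y : EuclideanSpace ℝ ι) :
    coordReflection i y i = -y i :=
  Function.update_self i _ _

theorem coordReflection_apply_of_ne {i j : ι} (h : j ≠ i) (y : EuclideanSpace ℝ ι) :
    coordReflection i y j = y j :=
  Function.update_of_ne h _ _

end Reflection

variable [Fintype ι]

theorem abs_sub_apply_le_dist (u v : EuclideanSpace ℝ ι) (i : ι) :
    |u i - v i| ≤ dist u v := by
  simpa only [Real.dist_eq] using PiLp.dist_apply_le u v i

theorem frontier_setOf_pos_apply (i : ι) :
    frontier {w : EuclideanSpace ℝ ι | 0 < w i} = {w | w i = 0} := by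
  classical
  have hsurj : Function.Surjective (proj (𝕜 := ℝ) i) := fun a => ⟨single i a, by simp⟩
  exact (ContinuousLinearMap.frontier_preimage _ hsurj (Set.Ioi 0)).trans
    (by rw [frontier_Ioi]; rfl)

theorem exists_wbtw_apply_eq_zero {u v : EuclideanSpace ℝ ι} {i : ι} (hu : 0 < u i)
    (hv : v i ≤ 0) : ∃ z, Wbtw ℝ u z v ∧ z i = 0 := by
  have hpos : 0 < u i - v i := by linarith
  refine ⟨AffineMap.lineMap u v (u i / (u i - v i)),
    ⟨_, ⟨by positivity, (div_le_one hpos).2 (by linarith)⟩, rfl⟩, ?_⟩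
  simp only [AffineMap.lineMap_apply_module, PiLp.add_apply, PiLp.smul_apply, smul_eq_mul]
  field_simp
  ring

theorem apply_pos_of_mem_ball {x y c : EuclideanSpace ℝ ι} {i : ι} {r : ℝ} (hx : 0 < x i)
    (hr : r ∈ Set.Ioo (0 : ℝ) 1) (hc₂ : c i = x i * (1 + r ^ 2) / (1 - r ^ 2))
    (hy : y ∈ ball c (2 * x i * r / (1 - r ^ 2))) : 0 < y i := by
  obtain ⟨hr₀, hr₁⟩ := hr
  have hlow : c i - 2 * x i * r / (1 - r ^ 2) = x i * (1 - r) / (1 + r) := by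
    have : 1 - r ^ 2 ≠ 0 := by nlinarith
    rw [hc₂]
    field_simp
    ring
  have hyc := (abs_sub_apply_le_dist y c i).trans_lt hy
  have : 0 < x i * (1 - r) / (1 + r) := by apply div_pos <;> nlinarith
  linarith [neg_abs_le (y i - c i)]

variable [DecidableEq ι]

theorem dist_sq_eq_sq_add_sum_erase (u v : EuclideanSpace ℝ ι) (i : ι) :
    dist u v ^ 2 = (u i - v i) ^ 2 + ∑ j ∈ univ.erase i, (u j - v j) ^ 2 := by
  rw [dist_eq, Real.sq_sqrt (by positivity), ← add_sum_erase _ _ (mem_univ i)]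
  simp only [Real.dist_eq, sq_abs]

theorem sum_erase_sub_coordReflection_sq (u y : EuclideanSpace ℝ ι) (i : ι) :
    ∑ j ∈ univ.erase i, (u j - coordReflection i y j) ^ 2 =
      ∑ j ∈ univ.erase i, (u j - y j) ^ 2 :=
  sum_congr rfl fun j hj => by rw [coordReflection_apply_of_ne (ne_of_mem_erase hj)]

theorem dist_coordReflection_of_apply_eq_zero {i : ι} {z : EuclideanSpace ℝ ι} (hz : z i = 0)
    (y : EuclideanSpace ℝ ι) : dist z (coordReflection i y) = dist z y := by
  rw [← pow_left_inj₀ dist_nonneg dist_nonneg two_ne_zero, dist_sq_eq_sq_add_sum_erase _ _ i,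
    dist_sq_eq_sq_add_sum_erase _ _ i, sum_erase_sub_coordReflection_sq,
    coordReflection_apply_self, hz]
  ring

theorem dist_coordReflection_pos {x y : EuclideanSpace ℝ ι} {i : ι} (hx : 0 < x i)
    (hy : 0 < y i) : 0 < dist x (coordReflection i y) :=
  (abs_pos_of_pos (by simp only [coordReflection_apply_self]; linarith)).trans_le
    (abs_sub_apply_le_dist x _ i)

/-- `c` and `2 * x i * r / (1 - r ^ 2)` are the center and radius of the Apollonius sphere
`{y | dist x y = r * dist x (coordReflection i y)}`. -/
theorem dist_sq_sub_sq_mul_dist_coordReflection_sq {x y c : EuclideanSpace ℝ ι} {i : ι} {r : ℝ}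
    (hr : 1 - r ^ 2 ≠ 0) (hc₁ : ∀ j, j ≠ i → c j = x j)
    (hc₂ : c i = x i * (1 + r ^ 2) / (1 - r ^ 2)) :
    dist x y ^ 2 - r ^ 2 * dist x (coordReflection i y) ^ 2 =
      (1 - r ^ 2) * (dist y c ^ 2 - (2 * x i * r / (1 - r ^ 2)) ^ 2) := by
  have hsum : ∑ j ∈ univ.erase i, (y j - c j) ^ 2 = ∑ j ∈ univ.erase i, (x j - y j) ^ 2 :=
    sum_congr rfl fun j hj => by rw [hc₁ j (ne_of_mem_erase hj)]; ring
  rw [dist_sq_eq_sq_add_sum_erase _ _ i, dist_sq_eq_sq_add_sum_erase _ _ i,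
    dist_sq_eq_sq_add_sum_erase _ _ i, sum_erase_sub_coordReflection_sq, hsum,
    coordReflection_apply_self, hc₂]
  field_simp
  ring

end EuclideanSpace

/-- `0 ≤ M` is needed since the summand for `z ∉ s` is `⨆ _ : False, f z = sSup ∅ = 0`. -/
theorem Real.biSup_eq_of_forall_le_of_eq {α : Type*} {s : Set α} {f : α → ℝ} {M : ℝ}
    (hM : 0 ≤ M) (hle : ∀ z ∈ s, f z ≤ M) {z₀ : α} (hz₀ : z₀ ∈ s) (heq : f z₀ = M) :
    ⨆ z ∈ s, f z = M := by
  refine le_antisymm (Real.iSup_le (fun z => Real.iSup_le (hle z) hM) hM) ?_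
  have hbdd : BddAbove (Set.range fun z => ⨆ _ : z ∈ s, f z) :=
    ⟨M, Set.forall_mem_range.2 fun z => Real.iSup_le (hle z) hM⟩
  exact heq ▸ le_ciSup_of_le hbdd z₀ (by rw [ciSup_pos hz₀])

open EuclideanSpace

theorem sMetric_halfSpace_eq {n : ℕ} {i : Fin n} {x y : EuclideanSpace ℝ (Fin n)} (hx : 0 < x i)
    (hy : 0 < y i) :
    sMetric {w | 0 < w i} x y = dist x y / dist x (coordReflection i y) := by
  have hpos := dist_coordReflection_pos hx hy
  obtain ⟨z₀, hz₀x, hz₀⟩ :=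
    exists_wbtw_apply_eq_zero (v := coordReflection i y) hx
      (by simp only [coordReflection_apply_self]; linarith)
  rw [sMetric, frontier_setOf_pos_apply]
  refine Real.biSup_eq_of_forall_le_of_eq (by positivity) (fun z hz => ?_) hz₀ ?_
  · gcongr
    rw [← dist_coordReflection_of_apply_eq_zero hz y, dist_comm z x]
    exact dist_triangle _ _ _
  · rw [dist_comm z₀ x, ← dist_coordReflection_of_apply_eq_zero hz₀, hz₀x.dist_add_dist]

theorem sMetric_halfSpace_lt_iff {n : ℕ} {i : Fin n} {x y c : EuclideanSpace ℝ (Fin n)} {r : ℝ}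
    (hx : 0 < x i) (hy : 0 < y i) (hr : r ∈ Set.Ioo (0 : ℝ) 1) (hc₁ : ∀ j, j ≠ i → c j = x j)
    (hc₂ : c i = x i * (1 + r ^ 2) / (1 - r ^ 2)) :
    sMetric {w | 0 < w i} x y < r ↔ dist y c < 2 * x i * r / (1 - r ^ 2) := by
  obtain ⟨hr₀, hr₁⟩ := hr
  have hd : 0 < 1 - r ^ 2 := by nlinarith
  have hpos := dist_coordReflection_pos hx hy
  rw [sMetric_halfSpace_eq hx hy, div_lt_iff₀ hpos, ← sq_lt_sq₀ dist_nonneg (by positivity),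
    ← sq_lt_sq₀ dist_nonneg (by positivity), mul_pow, ← sub_neg,
    dist_sq_sub_sq_mul_dist_coordReflection_sq hd.ne' hc₁ hc₂]
  exact (smul_neg_iff_of_pos_left hd).trans sub_neg

theorem sBall_halfSpace_eq_ball_general (n : ℕ) (i : Fin n)
    (x : EuclideanSpace ℝ (Fin n)) (hx : 0 < x i) (r : ℝ) (hr : r ∈ Set.Ioo (0:ℝ) 1)
    (c : EuclideanSpace ℝ (Fin n)) (hc₁ : ∀ j, j ≠ i → c j = x j)
    (hc₂ : c i = x i * (1 + r^2) / (1 - r^2)) :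
    sBall {w : EuclideanSpace ℝ (Fin n) | 0 < w i} x r =
      Metric.ball c (2 * x i * r / (1 - r^2)) ∧
    StrictConvex ℝ (sBall {w : EuclideanSpace ℝ (Fin n) | 0 < w i} x r) := by
  have hball : sBall {w | 0 < w i} x r = ball c (2 * x i * r / (1 - r ^ 2)) := by
    ext y
    constructor
    · rintro ⟨hy, hs⟩
      exact (sMetric_halfSpace_lt_iff hx hy hr hc₁ hc₂).1 hs
    · intro hyc
      have hy := apply_pos_of_mem_ball hx hr hc₂ hyc
      exact ⟨hy, (sMetric_halfSpace_lt_iff hx hy hr hc₁ hc₂).2 hyc⟩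
  exact ⟨hball, hball ▸ (convex_ball c _).strictConvex_of_isOpen isOpen_ball⟩

/-- Let n ≥ 1, G = ℍⁿ, x ∈ G, and r ∈ (0,1). Then B_s(x,r) is exactly the open
Euclidean ball with center c and radius R, where c agrees with x in the first n−1
coordinates and has n-th coordinate xₙ(1+r²)/(1−r²), and R = 2xₙr/(1−r²).
In particular B_s(x,r) is strictly convex. -/
theorem sBall_halfSpace_eq_ball (n : ℕ) (hn : 1 ≤ n) (i : Fin n) (hi : (i : ℕ) = n - 1)
    (x : EuclideanSpace ℝ (Fin n)) (hx : 0 < x i) (r : ℝ) (hr : r ∈ Set.Ioo (0:ℝ) 1)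
    (c : EuclideanSpace ℝ (Fin n)) (hc₁ : ∀ j, j ≠ i → c j = x j)
    (hc₂ : c i = x i * (1 + r^2) / (1 - r^2)) :
    sBall {w : EuclideanSpace ℝ (Fin n) | 0 < w i} x r =
      Metric.ball c (2 * x i * r / (1 - r^2)) ∧
    StrictConvex ℝ (sBall {w : EuclideanSpace ℝ (Fin n) | 0 < w i} x r) :=
  sBall_halfSpace_eq_ball_general n i x hx r hr c hc₁ hc₂
end

section
/- Let G = ℍ² \ {e₂} ⊂ ℝ², where ℍ² = {(x₁,x₂) ∈ ℝ² : x₂ > 0} and e₂ = (0,1). Let x = (x₁, x₂) ∈ G satisfy x₂ < |x₁|, and let r ∈ (0, r₀], where r₀ = (√(x₁² + x₂²) − √2·x₂)/(|x₁| + x₂). Then the metric ball B_s(x,r) = {y ∈ G : s_G(x,y) < r} is a convex subset of ℝ². -/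
/-!
For `y` in the upper half plane, the supremum over the real axis in `s_G(x, y)` is attained
where the segment from `x` to the mirror image `ȳ` of `y` crosses the axis, and equals
`|x - y| / |x - ȳ|`. The sets `|x - y| < r |x - ȳ|` are Apollonian discs, and `r ≤ r₀` is
exactly what puts the disc inside the cone `y₂ ≤ sign(x₁) y₁`, which also contains `x`. For two
points of this cone the axis point `(sign x₁, 0)` is at least as close to each of them as `e₂`,
so the puncture does not increase `s_G`. Hence `B_s(x, r)` is the Apollonian disc, which is
convex.
-/

open Set Metric

local notation "ℝ²" => EuclideanSpace ℝ (Fin 2)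

section TriangularRatioMetric

variable {n : ℕ} {G : Set (EuclideanSpace ℝ (Fin n))} {x y z : EuclideanSpace ℝ (Fin n)}

theorem div_le_sMetric (hz : z ∈ frontier G) :
    dist x y / (dist z x + dist z y) ≤ sMetric G x y := by
  have hbdd :
      BddAbove (range fun w => ⨆ _ : w ∈ frontier G, dist x y / (dist w x + dist w y)) := by
    refine ⟨1, ?_⟩
    rintro _ ⟨w, rfl⟩
    exact Real.iSup_le (fun _ => div_le_one_of_le₀ (dist_triangle_left x y w) (by positivity))
      zero_le_one
  exact (ciSup_pos hz).symm.le.trans (le_ciSup hbdd z)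

theorem sMetric_le {M : ℝ} (hM : 0 ≤ M)
    (h : ∀ z ∈ frontier G, dist x y / (dist z x + dist z y) ≤ M) : sMetric G x y ≤ M :=
  Real.iSup_le (fun z => Real.iSup_le (h z) hM) hM

end TriangularRatioMetric

section FrontierDiffSingleton

variable {X : Type*} [TopologicalSpace X] [T1Space X] (s : Set X) (p : X)

theorem frontier_diff_singleton_subset : frontier (s \ {p}) ⊆ frontier s ∪ {p} := by
  intro z hz
  rcases frontier_inter_subset s {p}ᶜ hz with h | h
  · exact Or.inl h.1
  · rw [frontier_compl] at h
    exact Or.inr (closure_singleton (x := p) ▸ frontier_subset_closure h.2)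

theorem frontier_diff_subset_frontier_diff_singleton : frontier s \ {p} ⊆ frontier (s \ {p}) := by
  rintro z ⟨⟨hcl, hint⟩, hzp⟩
  refine ⟨?_, fun h => hint (interior_mono sdiff_subset h)⟩
  rw [sdiff_eq, inter_comm]
  exact isOpen_compl_singleton.inter_closure ⟨hzp, hcl⟩

end FrontierDiffSingleton

theorem frontier_upperHalfPlane : frontier {w : ℝ² | 0 < w 1} = {w | w 1 = 0} := by
  have hopen : IsOpenMap (EuclideanSpace.proj (1 : Fin 2) : ℝ² →L[ℝ] ℝ) :=
    ContinuousLinearMap.isOpenMap _ fun t => ⟨EuclideanSpace.single 1 t, by simp⟩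
  have := hopen.preimage_frontier_eq_frontier_preimage (ContinuousLinearMap.continuous _) (Ioi 0)
  rw [frontier_Ioi] at this
  exact this.symm

section Plane

variable {x y z w : ℝ²}

theorem dist_sq_fin_two (p q : ℝ²) : dist p q ^ 2 = (p 0 - q 0) ^ 2 + (p 1 - q 1) ^ 2 := by
  rw [EuclideanSpace.dist_eq, Real.sq_sqrt (by positivity), Fin.sum_univ_two, Real.dist_eq,
    Real.dist_eq, sq_abs, sq_abs]

theorem dist_le_dist_iff_fin_two {p q p' q' : ℝ²} :
    dist p q ≤ dist p' q' ↔
      (p 0 - q 0) ^ 2 + (p 1 - q 1) ^ 2 ≤ (p' 0 - q' 0) ^ 2 + (p' 1 - q' 1) ^ 2 := by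
  rw [← dist_sq_fin_two, ← dist_sq_fin_two,
    pow_le_pow_iff_left₀ dist_nonneg dist_nonneg two_ne_zero]

def reflectAxis (y : ℝ²) : ℝ² := !₂[y 0, -y 1]

@[simp] theorem reflectAxis_apply_zero (y : ℝ²) : reflectAxis y 0 = y 0 := by simp [reflectAxis]

@[simp] theorem reflectAxis_apply_one (y : ℝ²) : reflectAxis y 1 = -y 1 := by simp [reflectAxis]

theorem dist_reflectAxis_of_apply_one_eq_zero (hz : z 1 = 0) :
    dist z (reflectAxis y) = dist z y := by
  rw [← pow_left_inj₀ dist_nonneg dist_nonneg two_ne_zero, dist_sq_fin_two, dist_sq_fin_two]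
  simp only [reflectAxis_apply_zero, reflectAxis_apply_one, hz]
  ring

theorem dist_reflectAxis_le (hz : z 1 = 0) : dist x (reflectAxis y) ≤ dist z x + dist z y := by
  rw [dist_comm z x, ← dist_reflectAxis_of_apply_one_eq_zero hz]
  exact dist_triangle _ _ _

theorem exists_dist_add_dist_eq_dist_reflectAxis (hx : 0 < x 1) (hy : 0 < y 1) :
    ∃ z : ℝ², z 1 = 0 ∧ dist z x + dist z y = dist x (reflectAxis y) := by
  set t := x 1 / (x 1 + y 1)
  set z := AffineMap.lineMap x (reflectAxis y) t
  have hz : z 1 = 0 := by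
    simp only [z, AffineMap.lineMap_apply_module, PiLp.add_apply, PiLp.smul_apply, smul_eq_mul,
      reflectAxis_apply_one, t]
    field_simp
    ring
  have hzseg : z ∈ segment ℝ x (reflectAxis y) :=
    segment_eq_image_lineMap ℝ x (reflectAxis y) ▸
      mem_image_of_mem _ ⟨by positivity, (div_le_one (by positivity)).mpr (by linarith)⟩
  refine ⟨z, hz, ?_⟩
  rw [← dist_add_dist_of_mem_segment hzseg, dist_comm x, dist_reflectAxis_of_apply_one_eq_zero hz]

theorem dist_reflectAxis_pos (hx : 0 < x 1) (hy : 0 ≤ y 1) : 0 < dist x (reflectAxis y) :=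
  dist_pos.mpr fun h => by linarith [congrArg (· 1) h, reflectAxis_apply_one y]

theorem apply_one_pos_of_dist_lt_dist_reflectAxis (hx : 0 < x 1)
    (h : dist x y < dist x (reflectAxis y)) : 0 < y 1 := by
  rw [← pow_lt_pow_iff_left₀ dist_nonneg dist_nonneg two_ne_zero, dist_sq_fin_two,
    dist_sq_fin_two, reflectAxis_apply_zero, reflectAxis_apply_one] at h
  nlinarith

noncomputable def apolloniusCenter (x : ℝ²) (r : ℝ) : ℝ² :=
  !₂[x 0, x 1 * (1 + r ^ 2) / (1 - r ^ 2)]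

noncomputable def apolloniusRadius (x : ℝ²) (r : ℝ) : ℝ := 2 * x 1 * r / (1 - r ^ 2)

theorem setOf_dist_lt_mul_dist_reflectAxis {r : ℝ} (hx : 0 ≤ x 1) (hr₀ : 0 ≤ r) (hr₁ : r < 1) :
    {y | dist x y < r * dist x (reflectAxis y)} =
      ball (apolloniusCenter x r) (apolloniusRadius x r) := by
  have ht : 0 < 1 - r ^ 2 := by nlinarith
  ext y
  rw [mem_ofPred_eq, mem_ball, apolloniusRadius,
    ← pow_lt_pow_iff_left₀ dist_nonneg (mul_nonneg hr₀ dist_nonneg) two_ne_zero,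
    ← pow_lt_pow_iff_left₀ dist_nonneg (div_nonneg (by positivity) ht.le) two_ne_zero, mul_pow,
    dist_sq_fin_two, dist_sq_fin_two, dist_sq_fin_two]
  simp only [apolloniusCenter, reflectAxis_apply_zero, reflectAxis_apply_one,
    Matrix.cons_val_zero, Matrix.cons_val_one]
  have key : (x 0 - y 0) ^ 2 + (x 1 - y 1) ^ 2 - r ^ 2 * ((x 0 - y 0) ^ 2 + (x 1 - -y 1) ^ 2) =
      (1 - r ^ 2) * ((y 0 - x 0) ^ 2 + (y 1 - x 1 * (1 + r ^ 2) / (1 - r ^ 2)) ^ 2 -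
        (2 * x 1 * r / (1 - r ^ 2)) ^ 2) := by
    field_simp
    ring
  rw [← sub_neg, key, ← sub_neg (a := (y 0 - x 0) ^ 2 + _)]
  exact ⟨fun h => neg_of_mul_neg_right h ht.le, mul_neg_of_pos_of_neg ht⟩

theorem ball_subset_cone {σ ρ : ℝ} {q : ℝ²} (hσ : σ ^ 2 = 1) (h : √2 * ρ ≤ σ * q 0 - q 1) :
    ball q ρ ⊆ {w | w 1 ≤ σ * w 0} := by
  intro w hw
  have hu : |σ * (w 0 - q 0) - (w 1 - q 1)| ≤ √2 * dist w q := by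
    rw [← Real.sqrt_sq dist_nonneg, ← Real.sqrt_mul zero_le_two]
    refine Real.abs_le_sqrt ?_
    rw [dist_sq_fin_two]
    nlinarith [sq_nonneg ((w 0 - q 0) + σ * (w 1 - q 1))]
  have hρ : √2 * dist w q ≤ √2 * ρ := mul_le_mul_of_nonneg_left (mem_ball.mp hw).le (by positivity)
  show w 1 ≤ σ * w 0
  linarith [neg_abs_le (σ * (w 0 - q 0) - (w 1 - q 1))]

theorem dist_axis_le_dist_single_of_cone {σ : ℝ} (hσ : σ ^ 2 = 1) (hw : w 1 ≤ σ * w 0) :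
    dist !₂[σ, 0] w ≤ dist (EuclideanSpace.single 1 1) w := by
  rw [dist_le_dist_iff_fin_two]
  simp only [Matrix.cons_val_zero, Matrix.cons_val_one, ne_eq, zero_ne_one, not_false_eq_true,
    PiLp.single_eq_of_ne, PiLp.single_eq_same]
  nlinarith

theorem dist_reflectAxis_le_of_cone {σ : ℝ} (hσ : σ ^ 2 = 1) (hx : x 1 ≤ σ * x 0)
    (hy : y 1 ≤ σ * y 0) :
    dist x (reflectAxis y) ≤
      dist (EuclideanSpace.single 1 1) x + dist (EuclideanSpace.single 1 1) y :=
  (dist_reflectAxis_le (z := !₂[σ, 0]) (by simp)).trans <|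
    add_le_add (dist_axis_le_dist_single_of_cone hσ hx) (dist_axis_le_dist_single_of_cone hσ hy)

theorem ball_apollonius_subset_cone {σ r : ℝ} (hσ : σ ^ 2 = 1) (hr₀ : 0 ≤ r) (hr₁ : r < 1)
    (h : √2 * (2 * x 1 * r) ≤ σ * x 0 * (1 - r ^ 2) - x 1 * (1 + r ^ 2)) :
    ball (apolloniusCenter x r) (apolloniusRadius x r) ⊆ {w | w 1 ≤ σ * w 0} := by
  have ht : 0 < 1 - r ^ 2 := by nlinarith
  refine ball_subset_cone hσ ?_
  simp only [apolloniusCenter, apolloniusRadius, Matrix.cons_val_zero, Matrix.cons_val_one]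
  rw [mul_div_assoc', div_le_iff₀ ht, sub_mul, div_mul_cancel₀ _ ht.ne']
  linarith

end Plane

theorem exists_sq_eq_one_mul_eq_abs (a : ℝ) : ∃ σ : ℝ, σ ^ 2 = 1 ∧ σ * a = |a| := by
  rcases abs_choice a with h | h
  · exact ⟨1, one_pow 2, by rw [h, one_mul]⟩
  · exact ⟨-1, by norm_num, by rw [h, neg_one_mul]⟩

theorem sqrt_two_mul_le_of_le_div {A b r : ℝ} (hb : 0 < b) (hbA : b < A) (hr : 0 ≤ r)
    (h : r ≤ (√(A ^ 2 + b ^ 2) - √2 * b) / (A + b)) :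
    √2 * (2 * b * r) ≤ A * (1 - r ^ 2) - b * (1 + r ^ 2) := by
  have hAb : 0 < A + b := by linarith
  have h2 : √2 ^ 2 = 2 := Real.sq_sqrt zero_le_two
  have hlin : r * (A + b) + √2 * b ≤ √(A ^ 2 + b ^ 2) := by
    rw [le_div_iff₀ hAb] at h
    linarith
  have hsq : (r * (A + b) + √2 * b) ^ 2 ≤ A ^ 2 + b ^ 2 :=
    (pow_le_pow_left₀ (by positivity) hlin 2).trans (Real.sq_sqrt (by positivity)).le
  nlinarith

theorem lt_one_of_sqrt_two_mul_le {A b r : ℝ} (hA : 0 ≤ A) (hb : 0 < b) (hr : 0 ≤ r)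
    (h : √2 * (2 * b * r) ≤ A * (1 - r ^ 2) - b * (1 + r ^ 2)) : r < 1 := by
  by_contra! h1
  have hA' : A * (1 - r ^ 2) ≤ 0 := mul_nonpos_of_nonneg_of_nonpos hA (by nlinarith)
  have : 0 < b * (1 + r ^ 2) := by positivity
  linarith [show 0 ≤ √2 * (2 * b * r) by positivity]

section PuncturedHalfPlane

variable {x y : ℝ²}

theorem div_dist_reflectAxis_le_sMetric {p : ℝ²} (hp : p 1 ≠ 0) (hx : 0 < x 1) (hy : 0 < y 1) :
    dist x y / dist x (reflectAxis y) ≤ sMetric ({w | 0 < w 1} \ {p}) x y := by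
  obtain ⟨z, hz, hzxy⟩ := exists_dist_add_dist_eq_dist_reflectAxis hx hy
  have hzG : z ∈ frontier ({w : ℝ² | 0 < w 1} \ {p}) :=
    frontier_diff_subset_frontier_diff_singleton _ _
      ⟨by rwa [frontier_upperHalfPlane], fun hzp => hp (hzp ▸ hz)⟩
  exact hzxy ▸ div_le_sMetric hzG

theorem sMetric_le_div_dist_reflectAxis_of_cone {σ : ℝ} (hσ : σ ^ 2 = 1) (hx : 0 < x 1)
    (hy : 0 < y 1) (hxσ : x 1 ≤ σ * x 0) (hyσ : y 1 ≤ σ * y 0) :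
    sMetric ({w | 0 < w 1} \ {EuclideanSpace.single 1 1}) x y ≤
      dist x y / dist x (reflectAxis y) := by
  refine sMetric_le (by positivity) fun z hz => ?_
  refine div_le_div_of_nonneg_left dist_nonneg (dist_reflectAxis_pos hx hy.le) ?_
  rcases frontier_diff_singleton_subset _ _ hz with hz | rfl
  · exact dist_reflectAxis_le (by rwa [frontier_upperHalfPlane] at hz)
  · exact dist_reflectAxis_le_of_cone hσ hxσ hyσ

end PuncturedHalfPlane

/-- Let G = ℍ² \ {e₂} ⊂ ℝ². Let x = (x₁, x₂) ∈ G satisfy x₂ < |x₁|, and let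
r ∈ (0, r₀], where r₀ = (√(x₁² + x₂²) − √2·x₂)/(|x₁| + x₂). Then the metric ball
B_s(x,r) is a convex subset of ℝ². -/
theorem sBall_punctured_halfPlane_convex (x : EuclideanSpace ℝ (Fin 2))
    (hx : x ∈ {w : EuclideanSpace ℝ (Fin 2) | 0 < w 1} \ ({EuclideanSpace.single 1 (1:ℝ)} : Set (EuclideanSpace ℝ (Fin 2))))
    (hx' : x 1 < |x 0|) (r : ℝ)
    (hr : r ∈ Set.Ioc 0 ((Real.sqrt ((x 0)^2 + (x 1)^2) - Real.sqrt 2 * x 1) /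
      (|x 0| + x 1))) :
    Convex ℝ (sBall ({w : EuclideanSpace ℝ (Fin 2) | 0 < w 1} \ ({EuclideanSpace.single 1 (1:ℝ)} : Set (EuclideanSpace ℝ (Fin 2)))) x r) := by
  obtain ⟨⟨hx₁, -⟩, hr₀, hr⟩ := hx, hr
  obtain ⟨σ, hσ, hσx⟩ := exists_sq_eq_one_mul_eq_abs (x 0)
  have hcone := sqrt_two_mul_le_of_le_div hx₁ hx' hr₀.le (by rwa [sq_abs])
  have hr₁ : r < 1 := lt_one_of_sqrt_two_mul_le (abs_nonneg _) hx₁ hr₀.le hcone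
  rw [← hσx] at hcone
  have hball := setOf_dist_lt_mul_dist_reflectAxis hx₁.le hr₀.le hr₁
  suffices sBall _ x r = ball (apolloniusCenter x r) (apolloniusRadius x r) from
    this ▸ convex_ball _ _
  rw [← hball]
  ext y
  constructor
  · rintro ⟨⟨hy₁, -⟩, hy⟩
    exact (div_lt_iff₀ (dist_reflectAxis_pos hx₁ hy₁.le)).mp
      ((div_dist_reflectAxis_le_sMetric (by simp) hx₁ hy₁).trans_lt hy)
  · intro hy
    have hy₁ : 0 < y 1 := apply_one_pos_of_dist_lt_dist_reflectAxis hx₁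
      (hy.trans_le (mul_le_of_le_one_left dist_nonneg hr₁.le))
    have hxσ : x 1 ≤ σ * x 0 := hσx ▸ hx'.le
    have hyσ : y 1 ≤ σ * y 0 := ball_apollonius_subset_cone hσ hr₀.le hr₁ hcone (hball ▸ hy)
    refine ⟨⟨hy₁, fun hye => by norm_num [mem_singleton_iff.mp hye] at hyσ⟩, ?_⟩
    exact (sMetric_le_div_dist_reflectAxis_of_cone hσ hx₁ hy₁ hxσ hyσ).trans_lt
      ((div_lt_iff₀ (dist_reflectAxis_pos hx₁ hy₁.le)).mpr hy)
end
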